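/- Let r : ℕ → N be a reference string, t ∈ ℕ, and for each unit x ∈ {r_0, …, r_t} let L(x) = max{ s ≤ t : r_s = x } denote its most recent reference time up to t. Fix an integer k with 1 ≤ k ≤ |{r_0,…,r_t}| and let T be the minimal window size with w(t,T) = k. Then the working-set W(t,T) consists exactly of the k most recently used distinct units: W(t,T) = { x ∈ {r_0,…,r_t} : |{ y ∈ {r_0,…,r_t} : L(y) ≥ L(x) }| ≤ k }. (This is the sense in which the working-set with suitably chosen window models the content of an LRU cache of capacity k.) -/
import Mathlib


/-- The working set `W(t,T)` of a reference string `r : ℕ → N`: the set of distinct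
units referenced in the window `[max(0, t-T+1), t]` (in `ℕ`, `t+1-T` is truncated
subtraction, so the window is `[t+1-T, t]`). -/
def workingSet {N : Type*} [DecidableEq N] (r : ℕ → N) (t : ℕ) (T : ℕ) : Finset N :=
  (Finset.Icc (t + 1 - T) t).image r

/-- Let `r : ℕ → N` be a reference string, `t : ℕ`, and for each unit
`x` referenced in `{r 0, …, r t}` let `L x = max {s ≤ t : r s = x}` be its most recent
reference time up to `t`.  Fix `k` with `1 ≤ k ≤ |{r 0, …, r t}|` and let `T` be the
minimal window size with `w(t,T) = k`.  Then the working set `W(t,T)` consists exactly of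
the `k` most recently used distinct units:
`W(t,T) = {x ∈ {r 0,…,r t} : |{y ∈ {r 0,…,r t} : L y ≥ L x}| ≤ k}`. -/
theorem workingSet_eq_LRU_cache_content
    {N : Type*} [Fintype N] [DecidableEq N] (r : ℕ → N) (t : ℕ)
    (L : N → ℕ)
    (hL : ∀ x ∈ (Finset.range (t + 1)).image r, L x = sSup {s | s ≤ t ∧ r s = x})
    (k : ℕ) (hk1 : 1 ≤ k) (hk2 : k ≤ ((Finset.range (t + 1)).image r).card)
    (T : ℕ) (hT : (workingSet r t T).card = k)
    (hTmin : ∀ T' : ℕ, T' < T → (workingSet r t T').card ≠ k) :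
    workingSet r t T
      = ((Finset.range (t + 1)).image r).filter
          (fun x => (((Finset.range (t + 1)).image r).filter (fun y => L x ≤ L y)).card ≤ k) := by
  classical
  set R := (Finset.range (t + 1)).image r with hR
  have hmemR : ∀ s, s ≤ t → r s ∈ R := fun s hs =>
    Finset.mem_image.2 ⟨s, Finset.mem_range.2 (Nat.lt_succ_of_le hs), rfl⟩
  have hbdd : ∀ x : N, BddAbove {s | s ≤ t ∧ r s = x} := fun x => ⟨t, fun m hm => hm.1⟩
  have hLmem : ∀ x ∈ R, L x ≤ t ∧ r (L x) = x := by
    intro x hx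
    obtain ⟨s, hs, hrs⟩ := Finset.mem_image.1 hx
    rw [Finset.mem_range, Nat.lt_succ_iff] at hs
    have := Nat.sSup_mem (s := {s | s ≤ t ∧ r s = x}) ⟨s, hs, hrs⟩ (hbdd x)
    rwa [← hL x hx] at this
  have hLge : ∀ x, ∀ s, s ≤ t → r s = x → s ≤ L x := by
    intro x s hs hrs
    rw [hL x (hrs ▸ hmemR s hs)]
    exact le_csSup (hbdd x) ⟨hs, hrs⟩
  have hWmem : ∀ x, x ∈ workingSet r t T ↔ x ∈ R ∧ t + 1 - T ≤ L x := by
    intro x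
    constructor
    · rintro hx
      obtain ⟨s, hs, hrs⟩ := Finset.mem_image.1 hx
      rw [Finset.mem_Icc] at hs
      exact ⟨hrs ▸ hmemR s hs.2, le_trans hs.1 (hLge x s hs.2 hrs)⟩
    · rintro ⟨hx, hle⟩
      obtain ⟨hLt, hrL⟩ := hLmem x hx
      exact Finset.mem_image.2 ⟨L x, Finset.mem_Icc.2 ⟨hle, hLt⟩, hrL⟩
  ext x
  simp only [Finset.mem_filter]
  constructor
  · intro hx
    obtain ⟨hxR, hxL⟩ := (hWmem x).1 hx
    refine ⟨hxR, ?_⟩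
    refine le_trans (Finset.card_le_card ?_) (le_of_eq hT)
    intro y hy
    rw [Finset.mem_filter] at hy
    exact (hWmem y).2 ⟨hy.1, le_trans hxL hy.2⟩
  · rintro ⟨hxR, hcard⟩
    by_contra hxW
    have hxL : L x < t + 1 - T := by
      by_contra h
      exact hxW ((hWmem x).2 ⟨hxR, le_of_not_gt h⟩)
    have hsub : insert x (workingSet r t T) ⊆ R.filter (fun y => L x ≤ L y) := by
      intro y hy
      rw [Finset.mem_insert] at hy
      rcases hy with rfl | hy
      · exact Finset.mem_filter.2 ⟨hxR, le_rfl⟩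
      · obtain ⟨hyR, hyL⟩ := (hWmem y).1 hy
        exact Finset.mem_filter.2 ⟨hyR, le_of_lt (lt_of_lt_of_le hxL hyL)⟩
    have hge : k + 1 ≤ (R.filter (fun y => L x ≤ L y)).card := by
      have := Finset.card_le_card hsub
      rwa [Finset.card_insert_of_notMem hxW, hT] at this
    omega
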